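/- arXiv:1609.09051 — 3 statements merged into one kernel-verified Lean document; each statement's English description precedes it below -/
import Mathlib

section
/- Let T1=(S ∪ U1, E1) and T2=(S ∪ U2, E2) be transmission trees with the same set of sampled cases S. If T1 and T2 are S-isomorphic, then v|_S(T1) = v|_S(T2). -/
/-- A directed path from `a` to `b` in the directed graph with edge relation `E`:
a nonempty list of vertices starting at `a`, ending at `b`, with consecutive
vertices joined by directed edges. -/
def IsDirPath {V : Type*} (E : V → V → Prop) (a b : V) (l : List V) : Prop :=
  l ≠ [] ∧ l.head? = some a ∧ l.getLast? = some b ∧ l.Chain' E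

/-- The transmission-tree axioms for a directed graph with edge relation `E`:
every node has at most one infector (incoming edge), there are no directed cycles,
and the underlying undirected graph is connected. -/
def IsTransTree {V : Type*} (E : V → V → Prop) : Prop :=
  (∀ a b c : V, E a c → E b c → a = b) ∧
  (∀ v : V, ¬ Relation.TransGen E v v) ∧
  (SimpleGraph.fromRel E).Connected

/-- The depth of node `n` (relative to the source `root`): the number of edges on
the directed path from `root` to `n`. -/
noncomputable def depth {V : Type*} (E : V → V → Prop) (root n : V) : ℕ :=
  sInf {k | ∃ l : List V, IsDirPath E root n l ∧ l.length = k + 1}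

/-- `OnPath E root i m` : the node `m` lies on the directed path `p_i` from `root` to `i`. -/
def OnPath {V : Type*} (E : V → V → Prop) (root i m : V) : Prop :=
  ∃ l : List V, IsDirPath E root i l ∧ m ∈ l

/-- `IsMRCI E root i j m` : `m` is the most recent common infector of `i` and `j`,
i.e. the node of greatest depth lying both on the path from `root` to `i` and on
the path from `root` to `j`. -/
def IsMRCI {V : Type*} (E : V → V → Prop) (root i j m : V) : Prop :=
  OnPath E root i m ∧ OnPath E root j m ∧
    ∀ m' : V, OnPath E root i m' → OnPath E root j m' →
      depth E root m' ≤ depth E root m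

/-- `vEntry E root i j` : the entry `v_{i,j}(T)` of the tree vector, namely the depth of
the most recent common infector of `i` and `j` (the greatest depth of a node lying on
both the path from the source to `i` and the path from the source to `j`). -/
noncomputable def vEntry {V : Type*} (E : V → V → Prop) (root i j : V) : ℕ :=
  sSup {k | ∃ m : V, OnPath E root i m ∧ OnPath E root j m ∧ depth E root m = k}

/-- The node set of the fully pruned tree `T*`: the nodes having at least one sampled
case among themselves-or-their-descendants, i.e. the nodes left after iteratively
removing unsampled nodes with no infectees. -/
def PrunedSet {V : Type*} (E : V → V → Prop) (Samp : Set V) : Set V :=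
  {n : V | ∃ s ∈ Samp, Relation.ReflTransGen E n s}

/-- `S`-isomorphism of two transmission trees with node sets `S ⊕ U1` and `S ⊕ U2`
(sampled cases `S`, unsampled cases `U1`, `U2`): after pruning unsampled nodes
without sampled descendants, there is a bijection between the pruned node sets which
is the identity on the sampled cases and maps edges to edges in both directions. -/
def SIso {S U1 U2 : Type*} (E1 : S ⊕ U1 → S ⊕ U1 → Prop)
    (E2 : S ⊕ U2 → S ⊕ U2 → Prop) : Prop :=
  ∃ φ : (PrunedSet E1 (Set.range Sum.inl)) ≃ (PrunedSet E2 (Set.range Sum.inl)),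
    (∀ (s : S) (hs : (Sum.inl s : S ⊕ U1) ∈ PrunedSet E1 (Set.range Sum.inl)),
        (φ ⟨Sum.inl s, hs⟩ : S ⊕ U2) = Sum.inl s) ∧
    (∀ a b : (PrunedSet E1 (Set.range Sum.inl)),
        E1 a.1 b.1 ↔ E2 (φ a).1 (φ b).1)

/-! The pruned node set is closed under taking infectors, so it contains every node on a path
from the source to a sampled case, and an `S`-isomorphism of the pruned trees transports such
paths together with their lengths. The source is sent to the source, being the only node
without an infector. Hence both trees have the same set of depths of common infectors of two
sampled cases, and in particular the same maximum. -/

open Relation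

section Paths
variable {V : Type*} {E : V → V → Prop}

lemma isDirPath_singleton (a : V) : IsDirPath E a a [a] :=
  ⟨List.cons_ne_nil _ _, rfl, rfl, .singleton a⟩

lemma IsDirPath.concat {a b c : V} {l : List V} (h : IsDirPath E a b l) (hbc : E b c) :
    IsDirPath E a c (l ++ [c]) := by
  obtain ⟨hne, hhead, hlast, hchain⟩ := h
  refine ⟨by simp, by simp [hhead], by simp, hchain.append (.singleton c) ?_⟩
  simp_all

lemma IsDirPath.eq_concat {a c : V} {l : List V} (h : IsDirPath E a c l) (hca : c ≠ a) :
    ∃ l' b, l = l' ++ [c] ∧ IsDirPath E a b l' ∧ E b c := by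
  obtain ⟨-, hhead, hlast, hchain⟩ := h
  obtain ⟨l', rfl⟩ := List.getLast?_eq_some_iff.1 hlast
  have hne : l' ≠ [] := by rintro rfl; simp_all
  refine ⟨l', l'.getLast hne, rfl,
    ⟨hne, ?_, List.getLast?_eq_some_getLast hne, hchain.left_of_append⟩,
    hchain.rel_getLast_head_of_append hne (List.cons_ne_nil _ _)⟩
  rwa [List.head?_append_of_ne_nil _ hne] at hhead

lemma IsDirPath.reflTransGen_of_mem {a b m : V} {l : List V} (h : IsDirPath E a b l)
    (hm : m ∈ l) : ReflTransGen E a m ∧ ReflTransGen E m b := by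
  obtain ⟨-, hhead, hlast, hchain⟩ := h
  refine ⟨hchain.induction (ReflTransGen E a) l (fun _ _ hxy hx => hx.tail hxy) ?_ m hm,
    hchain.backwards_induction (ReflTransGen E · b) l (fun _ _ hxy hy => hy.head hxy) ?_ m hm⟩
  · intro hne; rw [List.head?_eq_some_head hne] at hhead; cases hhead; exact .refl
  · intro hne; rw [List.getLast?_eq_some_getLast hne] at hlast; cases hlast; exact .refl

lemma exists_isDirPath_of_reflTransGen {a b : V} (h : ReflTransGen E a b) :
    ∃ l, IsDirPath E a b l := by
  induction h with
  | refl => exact ⟨_, isDirPath_singleton a⟩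
  | tail _ hcd ih => obtain ⟨l, hl⟩ := ih; exact ⟨_, hl.concat hcd⟩

lemma onPath_iff {root i m : V} :
    OnPath E root i m ↔ ReflTransGen E root m ∧ ReflTransGen E m i := by
  constructor
  · rintro ⟨l, hl, hm⟩
    exact hl.reflTransGen_of_mem hm
  rintro ⟨hrm, hmi⟩
  induction hmi with
  | refl =>
    obtain ⟨l, hl⟩ := exists_isDirPath_of_reflTransGen hrm
    exact ⟨l, hl, List.mem_of_getLast? hl.2.2.1⟩
  | tail _ hcd ih =>
    obtain ⟨l, hl, hm⟩ := ih
    exact ⟨_, hl.concat hcd, List.mem_append_left _ hm⟩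

lemma depth_self (root : V) : depth E root root = 0 :=
  Nat.sInf_eq_zero.2 (Or.inl ⟨[root], isDirPath_singleton root, rfl⟩)

-- With unique infectors, the paths to `b` are exactly the paths to `a` extended by `b`.
lemma depth_eq_depth_add_one (hpar : ∀ a b c : V, E a c → E b c → a = b) {root a b : V}
    (hroot : ∀ x, ¬ E x root) (ha : ReflTransGen E root a) (hab : E a b) :
    depth E root b = depth E root a + 1 := by
  have hb : b ≠ root := by rintro rfl; exact hroot a hab
  have hlen : ∀ k, (∃ l, IsDirPath E root b l ∧ l.length = k + 1 + 1) ↔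
      ∃ l, IsDirPath E root a l ∧ l.length = k + 1 := by
    refine fun k => ⟨fun ⟨l, hl, hlk⟩ => ?_,
      fun ⟨l, hl, hlk⟩ => ⟨_, hl.concat hab, by simp [hlk]⟩⟩
    obtain ⟨l', p, rfl, hl', hpb⟩ := hl.eq_concat hb
    obtain rfl := hpar _ _ _ hpb hab
    exact ⟨l', hl', by simpa using hlk⟩
  have hpos : 1 ≤ depth E root b := by
    refine Nat.one_le_iff_ne_zero.2 fun h0 => ?_
    rcases Nat.sInf_eq_zero.1 h0 with ⟨l, hl, hl1⟩ | hempty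
    · obtain ⟨x, rfl⟩ := List.length_eq_one_iff.1 hl1
      exact hb (by simpa using hl.2.2.1.symm.trans hl.2.1)
    · obtain ⟨l, hl⟩ := exists_isDirPath_of_reflTransGen (ha.tail hab)
      exact hempty.subset ⟨l, hl, (Nat.succ_pred_eq_of_pos (List.length_pos_iff.2 hl.1)).symm⟩
  unfold depth at hpos ⊢
  rw [← Nat.sInf_add hpos]
  simp only [hlen]

lemma reflTransGen_of_connected (hpar : ∀ a b c : V, E a c → E b c → a = b)
    (hconn : (SimpleGraph.fromRel E).Connected) {root : V} (hroot : ∀ x, ¬ E x root) (n : V) :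
    ReflTransGen E root n := by
  induction (SimpleGraph.reachable_iff_reflTransGen _ _).1 (hconn root n) with
  | refl => exact .refl
  | @tail c d _ hadj ih =>
    rcases ((SimpleGraph.fromRel_adj _ _ _).1 hadj).2 with hcd | hdc
    · exact ih.tail hcd
    · rcases ih.cases_tail with rfl | ⟨e, hre, hec⟩
      · exact absurd hdc (hroot d)
      · rwa [hpar _ _ _ hdc hec]

end Paths

def commonDepths {V : Type*} (E : V → V → Prop) (root i j : V) : Set ℕ :=
  {k | ∃ m : V, OnPath E root i m ∧ OnPath E root j m ∧ depth E root m = k}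

lemma vEntry_eq_sSup_commonDepths {V : Type*} (E : V → V → Prop) (root i j : V) :
    vEntry E root i j = sSup (commonDepths E root i j) :=
  rfl

section PrunedIso
variable {V W : Type*} {E : V → V → Prop} {E' : W → W → Prop} {A : Set V} {B : Set W}

lemma mem_prunedSet_of_reflTransGen {a b : V} (h : ReflTransGen E a b)
    (hb : b ∈ PrunedSet E A) : a ∈ PrunedSet E A :=
  let ⟨s, hs, hbs⟩ := hb
  ⟨s, hs, h.trans hbs⟩

lemma reflTransGen_subrel_prunedSet {a b : PrunedSet E A} (h : ReflTransGen E a b) :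
    ReflTransGen (Subrel E (· ∈ PrunedSet E A)) a b := by
  obtain ⟨b, hb⟩ := b
  suffices ∀ x (hx : ReflTransGen E x b),
      ReflTransGen (Subrel E (· ∈ PrunedSet E A))
        ⟨x, mem_prunedSet_of_reflTransGen hx hb⟩ ⟨b, hb⟩
    from this a h
  intro x hx
  induction hx using ReflTransGen.head_induction_on with
  | refl => exact .refl
  | head hxy hyb ih =>
    exact .head (b := ⟨_, mem_prunedSet_of_reflTransGen hyb hb⟩) ((subrel_val _ _).2 hxy) ih

lemma RelIso.reflTransGen_prunedSet
    (φ : Subrel E (· ∈ PrunedSet E A) ≃r Subrel E' (· ∈ PrunedSet E' B))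
    {a b : PrunedSet E A} (h : ReflTransGen E a b) :
    ReflTransGen E' (φ a) (φ b) :=
  (reflTransGen_subrel_prunedSet h).lift (fun x => (φ x).1) fun _ _ hxy => φ.map_rel_iff.2 hxy

variable {root : V} {root' : W}

lemma RelIso.coe_apply_root_prunedSet
    (φ : Subrel E (· ∈ PrunedSet E A) ≃r Subrel E' (· ∈ PrunedSet E' B))
    (hroot : ∀ x, ¬ E x root) (hreach' : ∀ n, ReflTransGen E' root' n)
    (hr : root ∈ PrunedSet E A) : (φ ⟨root, hr⟩ : W) = root' := by
  rcases (hreach' (φ ⟨root, hr⟩)).cases_tail with h | ⟨c, -, hc⟩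
  · exact h
  · have hcP : c ∈ PrunedSet E' B :=
      mem_prunedSet_of_reflTransGen (.single hc) (φ ⟨root, hr⟩).2
    have h := φ.map_rel_iff (a := φ.symm ⟨c, hcP⟩) (b := ⟨root, hr⟩)
    rw [RelIso.apply_symm_apply] at h
    exact absurd (h.1 hc) (hroot _)

lemma RelIso.depth_prunedSet
    (φ : Subrel E (· ∈ PrunedSet E A) ≃r Subrel E' (· ∈ PrunedSet E' B))
    (hpar : ∀ a b c : V, E a c → E b c → a = b)
    (hpar' : ∀ a b c : W, E' a c → E' b c → a = b)
    (hroot : ∀ x, ¬ E x root) (hroot' : ∀ x, ¬ E' x root')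
    (hreach' : ∀ n, ReflTransGen E' root' n)
    {m : PrunedSet E A} (hm : ReflTransGen E root m) :
    depth E' root' (φ m) = depth E root m := by
  have hr : root ∈ PrunedSet E A := mem_prunedSet_of_reflTransGen hm m.2
  have hφr := φ.coe_apply_root_prunedSet hroot hreach' hr
  induction reflTransGen_subrel_prunedSet (a := ⟨root, hr⟩) hm with
  | refl => rw [hφr, depth_self, depth_self]
  | tail hrc hcd ih =>
    have hrc' : ReflTransGen E root _ := hrc.lift Subtype.val fun _ _ h => h
    rw [depth_eq_depth_add_one hpar hroot hrc' hcd,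
      depth_eq_depth_add_one hpar' hroot' (hφr ▸ φ.reflTransGen_prunedSet hrc')
        (φ.map_rel_iff.2 hcd),
      ih hrc']

lemma RelIso.onPath_prunedSet
    (φ : Subrel E (· ∈ PrunedSet E A) ≃r Subrel E' (· ∈ PrunedSet E' B))
    (hroot : ∀ x, ¬ E x root) (hreach' : ∀ n, ReflTransGen E' root' n)
    {i m : PrunedSet E A} (h : OnPath E root i m) : OnPath E' root' (φ i) (φ m) := by
  obtain ⟨hrm, hmi⟩ := onPath_iff.1 h
  have hr : root ∈ PrunedSet E A := mem_prunedSet_of_reflTransGen hrm m.2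
  rw [← φ.coe_apply_root_prunedSet hroot hreach' hr]
  exact onPath_iff.2
    ⟨φ.reflTransGen_prunedSet (a := ⟨root, hr⟩) hrm, φ.reflTransGen_prunedSet hmi⟩

lemma RelIso.commonDepths_prunedSet_subset
    (φ : Subrel E (· ∈ PrunedSet E A) ≃r Subrel E' (· ∈ PrunedSet E' B))
    (hpar : ∀ a b c : V, E a c → E b c → a = b)
    (hpar' : ∀ a b c : W, E' a c → E' b c → a = b)
    (hroot : ∀ x, ¬ E x root) (hroot' : ∀ x, ¬ E' x root')
    (hreach' : ∀ n, ReflTransGen E' root' n)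
    (i j : PrunedSet E A) : commonDepths E root i j ⊆ commonDepths E' root' (φ i) (φ j) := by
  rintro k ⟨m, hmi, hmj, rfl⟩
  have hm : m ∈ PrunedSet E A := mem_prunedSet_of_reflTransGen (onPath_iff.1 hmi).2 i.2
  exact ⟨_, φ.onPath_prunedSet hroot hreach' (m := ⟨m, hm⟩) hmi,
    φ.onPath_prunedSet hroot hreach' (m := ⟨m, hm⟩) hmj,
    φ.depth_prunedSet hpar hpar' hroot hroot' hreach' (onPath_iff.1 hmi).1⟩

end PrunedIso

theorem stmt8_general {S U1 U2 : Type*}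
    (E1 : S ⊕ U1 → S ⊕ U1 → Prop) (E2 : S ⊕ U2 → S ⊕ U2 → Prop)
    (h1 : IsTransTree E1) (h2 : IsTransTree E2)
    (root1 : S ⊕ U1) (hroot1 : ∀ b, ¬ E1 b root1)
    (root2 : S ⊕ U2) (hroot2 : ∀ b, ¬ E2 b root2)
    (hiso : SIso E1 E2) :
    ∀ s t : S, vEntry E1 root1 (Sum.inl s) (Sum.inl t)
      = vEntry E2 root2 (Sum.inl s) (Sum.inl t) := by
  intro s t
  obtain ⟨φ, hφS, hφE⟩ := hiso
  let ψ : Subrel E1 (· ∈ PrunedSet E1 (Set.range Sum.inl)) ≃r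
      Subrel E2 (· ∈ PrunedSet E2 (Set.range Sum.inl)) := ⟨φ, (hφE _ _).symm⟩
  have hS1 (u : S) : (Sum.inl u : S ⊕ U1) ∈ PrunedSet E1 (Set.range Sum.inl) :=
    ⟨_, ⟨u, rfl⟩, .refl⟩
  have hS2 (u : S) : (Sum.inl u : S ⊕ U2) ∈ PrunedSet E2 (Set.range Sum.inl) :=
    ⟨_, ⟨u, rfl⟩, .refl⟩
  have hψ (u : S) : ψ ⟨Sum.inl u, hS1 u⟩ = ⟨Sum.inl u, hS2 u⟩ := Subtype.ext (hφS u _)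
  have hψsymm (u : S) : ψ.symm ⟨Sum.inl u, hS2 u⟩ = ⟨Sum.inl u, hS1 u⟩ := by
    rw [RelIso.symm_apply_eq, hψ]
  have hreach1 := reflTransGen_of_connected h1.1 h1.2.2 hroot1
  have hreach2 := reflTransGen_of_connected h2.1 h2.2.2 hroot2
  rw [vEntry_eq_sSup_commonDepths, vEntry_eq_sSup_commonDepths]
  congr 1
  apply Set.Subset.antisymm
  · simpa [hψ] using
      ψ.commonDepths_prunedSet_subset h1.1 h2.1 hroot1 hroot2 hreach2 ⟨_, hS1 s⟩ ⟨_, hS1 t⟩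
  · simpa [hψsymm] using
      ψ.symm.commonDepths_prunedSet_subset h2.1 h1.1 hroot2 hroot1 hreach1
        ⟨_, hS2 s⟩ ⟨_, hS2 t⟩

/-- If two transmission trees `T1 = (S ⊕ U1, E1)` and `T2 = (S ⊕ U2, E2)`
with the same set of sampled cases `S` are `S`-isomorphic, then `v|_S(T1) = v|_S(T2)`. -/
theorem stmt8 {S U1 U2 : Type*} [Fintype S] [Fintype U1] [Fintype U2]
    (E1 : S ⊕ U1 → S ⊕ U1 → Prop) (E2 : S ⊕ U2 → S ⊕ U2 → Prop)
    (h1 : IsTransTree E1) (h2 : IsTransTree E2)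
    (root1 : S ⊕ U1) (hroot1 : ∀ b, ¬ E1 b root1)
    (root2 : S ⊕ U2) (hroot2 : ∀ b, ¬ E2 b root2)
    (hiso : SIso E1 E2) :
    ∀ s t : S, vEntry E1 root1 (Sum.inl s) (Sum.inl t)
      = vEntry E2 root2 (Sum.inl s) (Sum.inl t) :=
  stmt8_general E1 E2 h1 h2 root1 hroot1 root2 hroot2 hiso
end

section
/- Let T1=(N1,E1) and T2=(N2,E2) be transmission trees on the same node set N1 = N2 = S with all cases sampled (no unsampled cases). If v(T1) = v(T2), i.e. for all i,j in S the depth of the most recent common infector of i and j is the same in T1 as in T2, then E1 = E2, i.e. T1 and T2 are the same tree. -/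
/-!
In a rooted tree the directed path from the source to a node is unique, so the diagonal entry
`v_{i,i}` is the depth of `i`, and `i` lies on the path to `j` exactly when `v_{i,j} = v_{i,i}`.
Moreover `a → b` is an edge exactly when `a` lies on the path to `b` one level above `b`, since
the infector of `b` is the only node of that depth on its path. So the edge relation can be read
off the tree vector.
-/

structure IsRootedTree {V : Type*} (E : V → V → Prop) (root : V) : Prop where
  parent_unique : ∀ a b c, E a c → E b c → a = b
  not_edge_root : ∀ b, ¬ E b root
  connected : (SimpleGraph.fromRel E).Connected

section DirPath

variable {V : Type*} {E : V → V → Prop} {root u v m : V} {l : List V}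

lemma IsDirPath.head_mem (h : IsDirPath E root v l) : root ∈ l :=
  List.mem_of_mem_head? h.2.1

lemma IsDirPath.last_mem (h : IsDirPath E root v l) : v ∈ l :=
  List.mem_of_mem_getLast? h.2.2.1

lemma IsDirPath.snoc (h : IsDirPath E root u l) (he : E u v) :
    IsDirPath E root v (l ++ [v]) := by
  obtain ⟨-, hh, hl, hc⟩ := h
  refine ⟨by simp, by simp [List.head?_append, hh], List.getLast?_concat, ?_⟩
  refine hc.append (List.isChain_singleton v) ?_
  rintro x hx y ⟨⟩
  rw [Option.mem_def, hl, Option.some_inj] at hx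
  exact hx ▸ he

lemma IsDirPath.eq_singleton_or_snoc (h : IsDirPath E root v l) :
    (v = root ∧ l = [root]) ∨ ∃ p l₀, IsDirPath E root p l₀ ∧ E p v ∧ l = l₀ ++ [v] := by
  obtain ⟨hne, hh, hl, hc⟩ := h
  obtain ⟨l₀, b, rfl⟩ := (List.eq_nil_or_concat l).resolve_left hne
  rw [List.concat_eq_append, List.getLast?_concat, Option.some_inj] at *
  subst hl
  rcases List.eq_nil_or_concat l₀ with rfl | ⟨t, p, rfl⟩
  · simp only [List.nil_append, List.head?_cons, Option.some_inj] at hh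
    exact Or.inl ⟨hh, by simp [hh]⟩
  · rw [List.concat_eq_append] at *
    obtain ⟨hc₀, -, hp⟩ := List.isChain_append.1 hc
    refine Or.inr ⟨p, t ++ [p], ⟨by simp, ?_, List.getLast?_concat, hc₀⟩, ?_, rfl⟩
    · simpa [List.head?_append] using hh
    · exact hp p (by simp) _ rfl

lemma IsDirPath.exists_prefix_of_mem (h : IsDirPath E root v l) (hm : m ∈ l) :
    ∃ l', IsDirPath E root m l' ∧ l' <+: l := by
  obtain ⟨s, t, rfl⟩ := List.append_of_mem hm
  have hpre : s ++ [m] <+: s ++ m :: t := ⟨t, by simp⟩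
  refine ⟨s ++ [m], ⟨by simp, ?_, List.getLast?_concat, h.2.2.2.prefix hpre⟩, hpre⟩
  simpa [List.head?_append] using h.2.1

end DirPath

namespace IsRootedTree

variable {V : Type*} {E : V → V → Prop} {root a b v m : V} {l : List V}

lemma reflTransGen_root (hT : IsRootedTree E root) (v : V) : Relation.ReflTransGen E root v := by
  have hreach := (SimpleGraph.reachable_iff_reflTransGen root v).1 (hT.connected.preconnected root v)
  induction hreach with
  | refl => exact .refl
  | tail _ hadj ih =>
    obtain ⟨-, hE | hE⟩ := hadj
    · exact ih.tail hE
    -- an edge traversed backwards leads to the infector, which is reached first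
    · rcases ih.cases_tail with rfl | ⟨x, hx, hxu⟩
      · exact absurd hE (hT.not_edge_root _)
      · rwa [hT.parent_unique _ _ _ hE hxu]

lemma exists_isDirPath (hT : IsRootedTree E root) (v : V) : ∃ l, IsDirPath E root v l := by
  induction hT.reflTransGen_root v with
  | refl => exact ⟨[root], ⟨by simp, rfl, rfl, List.isChain_singleton root⟩⟩
  | tail _ he ih =>
    obtain ⟨l, hl⟩ := ih
    exact ⟨_, hl.snoc he⟩

lemma isDirPath_unique (hT : IsRootedTree E root) {l' : List V}
    (h : IsDirPath E root v l) (h' : IsDirPath E root v l') : l = l' := by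
  induction l using List.reverseRecOn generalizing v l' with
  | nil => exact absurd rfl h.1
  | append_singleton init x ih =>
    rcases h.eq_singleton_or_snoc with ⟨rfl, hl⟩ | ⟨p, l₀, h₀, hp, hl⟩
    · rcases h'.eq_singleton_or_snoc with ⟨-, rfl⟩ | ⟨p', -, -, hp', -⟩
      · exact hl
      · exact absurd hp' (hT.not_edge_root p')
    · obtain ⟨rfl, -⟩ := List.append_inj' hl rfl
      rcases h'.eq_singleton_or_snoc with ⟨rfl, -⟩ | ⟨p', l₀', h₀', hp', rfl⟩
      · exact absurd hp (hT.not_edge_root p)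
      · obtain rfl := hT.parent_unique _ _ _ hp hp'
        rw [hl, ih h₀ h₀']

lemma depth_add_one (hT : IsRootedTree E root) (h : IsDirPath E root v l) :
    depth E root v + 1 = l.length := by
  have hpos := List.length_pos_iff.2 h.1
  have hset : {k | ∃ l', IsDirPath E root v l' ∧ l'.length = k + 1} = {l.length - 1} := by
    ext k
    constructor
    · rintro ⟨l', hl', hk⟩
      rw [hT.isDirPath_unique hl' h] at hk
      exact Set.mem_singleton_iff.2 (by omega)
    · rintro rfl
      exact ⟨l, h, by omega⟩
  rw [depth, hset, csInf_singleton]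
  omega

lemma depth_lt_of_mem_of_ne (hT : IsRootedTree E root) (h : IsDirPath E root v l)
    (hm : m ∈ l) (hne : m ≠ v) : depth E root m < depth E root v := by
  obtain ⟨l', hl', hpre⟩ := h.exists_prefix_of_mem hm
  have hlt : l'.length < l.length := by
    refine hpre.length_le.lt_of_ne fun hlen => hne ?_
    rw [hpre.eq_of_length hlen] at hl'
    exact Option.some_inj.1 (hl'.2.2.1.symm.trans h.2.2.1)
  have := hT.depth_add_one hl'
  have := hT.depth_add_one h
  omega

lemma depth_le_of_mem (hT : IsRootedTree E root) (h : IsDirPath E root v l) (hm : m ∈ l) :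
    depth E root m ≤ depth E root v := by
  rcases eq_or_ne m v with rfl | hne
  · rfl
  · exact (hT.depth_lt_of_mem_of_ne h hm hne).le

lemma depth_of_edge (hT : IsRootedTree E root) (he : E a b) :
    depth E root b = depth E root a + 1 := by
  obtain ⟨l, hl⟩ := hT.exists_isDirPath a
  have := hT.depth_add_one hl
  have := hT.depth_add_one (hl.snoc he)
  simp only [List.length_append, List.length_singleton] at *
  omega

lemma onPath_self (hT : IsRootedTree E root) (v : V) : OnPath E root v v :=
  let ⟨l, hl⟩ := hT.exists_isDirPath v
  ⟨l, hl, hl.last_mem⟩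

lemma onPath_root (hT : IsRootedTree E root) (v : V) : OnPath E root v root :=
  let ⟨l, hl⟩ := hT.exists_isDirPath v
  ⟨l, hl, hl.head_mem⟩

lemma vEntry_eq_depth_iff (hT : IsRootedTree E root) (i j : V) :
    vEntry E root i j = depth E root i ↔ OnPath E root j i := by
  set K := {k | ∃ m, OnPath E root i m ∧ OnPath E root j m ∧ depth E root m = k}
  have hbdd : ∀ k ∈ K, k ≤ depth E root i := by
    rintro _ ⟨m, ⟨l, hl, hm⟩, -, rfl⟩
    exact hT.depth_le_of_mem hl hm
  have hK : K.Nonempty := ⟨_, root, hT.onPath_root i, hT.onPath_root j, rfl⟩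
  constructor
  · intro h
    obtain ⟨m, ⟨l, hl, hm⟩, hmj, hdm⟩ : depth E root i ∈ K := h ▸ Nat.sSup_mem hK ⟨_, hbdd⟩
    by_cases hmi : m = i
    · exact hmi ▸ hmj
    · exact absurd hdm (hT.depth_lt_of_mem_of_ne hl hm hmi).ne
  · intro h
    exact le_antisymm (csSup_le hK hbdd) (le_csSup ⟨_, hbdd⟩ ⟨i, hT.onPath_self i, h, rfl⟩)

lemma vEntry_self (hT : IsRootedTree E root) (i : V) : vEntry E root i i = depth E root i :=
  (hT.vEntry_eq_depth_iff i i).2 (hT.onPath_self i)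

lemma edge_iff_onPath_and_depth (hT : IsRootedTree E root) :
    E a b ↔ OnPath E root b a ∧ depth E root b = depth E root a + 1 := by
  refine ⟨fun he => ?_, fun ⟨⟨l, hl, ha⟩, hd⟩ => ?_⟩
  · obtain ⟨l, hl⟩ := hT.exists_isDirPath a
    exact ⟨⟨_, hl.snoc he, List.mem_append_left _ hl.last_mem⟩, hT.depth_of_edge he⟩
  have hab : a ≠ b := by rintro rfl; omega
  rcases hl.eq_singleton_or_snoc with ⟨rfl, rfl⟩ | ⟨p, l₀, hl₀, hp, rfl⟩
  · exact absurd (List.mem_singleton.1 ha) hab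
  · have ha₀ : a ∈ l₀ := (List.mem_append.1 ha).resolve_right (by simpa using hab)
    have hap : depth E root a = depth E root p := by
      have := hT.depth_of_edge hp
      omega
    by_cases h : a = p
    · exact h ▸ hp
    · exact absurd hap (hT.depth_lt_of_mem_of_ne hl₀ ha₀ h).ne

lemma edge_iff_vEntry (hT : IsRootedTree E root) :
    E a b ↔ vEntry E root a b = vEntry E root a a ∧
      vEntry E root b b = vEntry E root a a + 1 := by
  rw [hT.edge_iff_onPath_and_depth, ← hT.vEntry_eq_depth_iff, hT.vEntry_self, hT.vEntry_self]

end IsRootedTree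

theorem stmt9_general {S : Type*} (E1 E2 : S → S → Prop)
    (h1 : IsTransTree E1) (h2 : IsTransTree E2)
    (root1 : S) (hroot1 : ∀ b, ¬ E1 b root1)
    (root2 : S) (hroot2 : ∀ b, ¬ E2 b root2)
    (hv : ∀ i j : S, vEntry E1 root1 i j = vEntry E2 root2 i j) :
    ∀ i j : S, E1 i j ↔ E2 i j := by
  have hT1 : IsRootedTree E1 root1 := ⟨h1.1, hroot1, h1.2.2⟩
  have hT2 : IsRootedTree E2 root2 := ⟨h2.1, hroot2, h2.2.2⟩
  intro i j
  rw [hT1.edge_iff_vEntry, hT2.edge_iff_vEntry, hv, hv, hv]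

/-- Let `T1` and `T2` be transmission trees on the same node set `S` with
all cases sampled. If `v(T1) = v(T2)`, i.e. every pair of nodes has the same MRCI depth
in both trees, then `E1 = E2`: the trees are identical. -/
theorem stmt9 {S : Type*} [Fintype S] (E1 E2 : S → S → Prop)
    (h1 : IsTransTree E1) (h2 : IsTransTree E2)
    (root1 : S) (hroot1 : ∀ b, ¬ E1 b root1)
    (root2 : S) (hroot2 : ∀ b, ¬ E2 b root2)
    (hv : ∀ i j : S, vEntry E1 root1 i j = vEntry E2 root2 i j) :
    ∀ i j : S, E1 i j ↔ E2 i j :=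
  stmt9_general E1 E2 h1 h2 root1 hroot1 root2 hroot2 hv
end

section
/- Let T=(S ∪ U, E) be a transmission tree, let i ∈ S be a sampled node of depth δ, and let x be an integer with 0 ≤ x ≤ δ. Then the (unique) node at depth x on the path p_i from the source to i is a sampled node a ∈ S if and only if v_{a,a}(T) = x and v_{a,i}(T) = x; and the node at depth x on p_i is unsampled if and only if there is no b ∈ S with v_{b,b}(T) = x and v_{b,i}(T) = x. -/
open Relation

section DirPath

variable {V : Type*} {R : V → V → Prop} {a b x y : V} {l t : List V}

theorem IsDirPath.reverse (h : IsDirPath R a b l) : IsDirPath (flip R) b a l.reverse :=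
  ⟨by simpa using h.1, by simpa using h.2.2.1, by simpa using h.2.1,
    List.isChain_reverse.2 h.2.2.2⟩

theorem isDirPath_singleton_iff : IsDirPath R a b [x] ↔ x = a ∧ x = b :=
  ⟨fun h => ⟨by simpa using h.2.1, by simpa using h.2.2.1⟩,
    fun ⟨ha, hb⟩ =>
      ⟨List.cons_ne_nil _ _, by simp [ha], by simp [hb], List.isChain_singleton x⟩⟩

theorem isDirPath_cons_cons_iff :
    IsDirPath R a b (x :: y :: t) ↔ x = a ∧ R x y ∧ IsDirPath R y b (y :: t) := by
  constructor
  · rintro ⟨-, ha, hb, hc⟩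
    obtain ⟨hxy, hc⟩ := List.isChain_cons_cons.1 hc
    rw [List.getLast?_cons_cons] at hb
    exact ⟨by simpa using ha, hxy, List.cons_ne_nil _ _, rfl, hb, hc⟩
  · rintro ⟨rfl, hxy, -, -, hb, hc⟩
    exact ⟨List.cons_ne_nil _ _, rfl, by rwa [List.getLast?_cons_cons],
      List.isChain_cons_cons.2 ⟨hxy, hc⟩⟩

theorem IsDirPath.head_mem_s11 (h : IsDirPath R a b l) : a ∈ l :=
  List.mem_of_mem_head? h.2.1

theorem IsDirPath.last_mem_s11 (h : IsDirPath R a b l) : b ∈ l :=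
  List.mem_of_mem_getLast? h.2.2.1

theorem IsDirPath.reflTransGen (h : IsDirPath R a b l) : ReflTransGen R a b := by
  obtain ⟨hne, ha, hb, hc⟩ := h
  have := List.relationReflTransGen_of_exists_isChain l hc hne
  rwa [(List.head_eq_iff_head?_eq_some hne).2 ha,
    (List.getLast_eq_iff_getLast?_eq_some hne).2 hb] at this

theorem IsDirPath.transGen (h : IsDirPath R a b (x :: y :: t)) : TransGen R a b := by
  obtain ⟨rfl, hxy, hy⟩ := isDirPath_cons_cons_iff.1 h
  exact TransGen.head' hxy hy.reflTransGen

theorem not_isDirPath_cons_cons_self (acyc : ∀ v, ¬ TransGen R v v) :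
    ¬ IsDirPath R a a (x :: y :: t) :=
  fun h => acyc a h.transGen

theorem IsDirPath.drop (h : IsDirPath R a b l) {k : ℕ} (hk : k < l.length) :
    IsDirPath R l[k] b (l.drop k) := by
  refine ⟨?_, ?_, ?_, h.2.2.2.drop k⟩
  · simpa using hk
  · simp [List.head?_drop, hk]
  · simpa [List.getLast?_drop, Nat.not_le.2 hk] using h.2.2.1

end DirPath

section TransTree

variable {V : Type*} {E : V → V → Prop} {root : V}

/- Paths from the source are handled reversed, as `flip E`-paths from a case back to the
source: read this way, each step goes to the unique infector, so the path is determined. -/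

theorem isDirPath_flip_unique (uniq : ∀ a b c : V, E a c → E b c → a = b)
    (acyc : ∀ v : V, ¬ TransGen E v v) {n : V} {r₁ r₂ : List V}
    (h₁ : IsDirPath (flip E) n root r₁) (h₂ : IsDirPath (flip E) n root r₂) :
    r₁ = r₂ := by
  have acyc' : ∀ v : V, ¬ TransGen (flip E) v v :=
    fun v hv => acyc v (transGen_swap.1 hv)
  induction r₁ generalizing n r₂ with
  | nil => exact absurd rfl h₁.1
  | cons x t ih =>
    match t, r₂, h₁, h₂ with
    | _, [], _, h₂ => exact absurd rfl h₂.1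
    | [], [_], h₁, h₂ =>
      rw [(isDirPath_singleton_iff.1 h₁).1, (isDirPath_singleton_iff.1 h₂).1]
    | [], _ :: _ :: _, h₁, h₂ =>
      obtain ⟨rfl, rfl⟩ := isDirPath_singleton_iff.1 h₁
      exact absurd h₂ (not_isDirPath_cons_cons_self acyc')
    | _ :: _, [_], h₁, h₂ =>
      obtain ⟨rfl, rfl⟩ := isDirPath_singleton_iff.1 h₂
      exact absurd h₁ (not_isDirPath_cons_cons_self acyc')
    | z :: t', y :: w :: s', h₁, h₂ =>
      obtain ⟨rfl, hz, h₁'⟩ := isDirPath_cons_cons_iff.1 h₁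
      obtain ⟨rfl, hw, h₂'⟩ := isDirPath_cons_cons_iff.1 h₂
      obtain rfl : z = w := uniq z w _ hz hw
      rw [ih h₁' h₂']

theorem exists_isDirPath_flip (uniq : ∀ a b c : V, E a c → E b c → a = b)
    (hroot : ∀ b : V, ¬ E b root) (conn : (SimpleGraph.fromRel E).Connected) (n : V) :
    ∃ r, IsDirPath (flip E) n root r := by
  obtain ⟨w⟩ := conn.preconnected root n
  suffices ∀ a b : V, (SimpleGraph.fromRel E).Walk a b →
      (∃ r, IsDirPath (flip E) a root r) → ∃ r, IsDirPath (flip E) b root r from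
    this root n w ⟨[root], isDirPath_singleton_iff.2 ⟨rfl, rfl⟩⟩
  intro a b w
  induction w with
  | nil => exact id
  | @cons c d _ hadj _ ih =>
    rintro ⟨r, hr⟩
    apply ih
    obtain ⟨-, hcd | hdc⟩ := (SimpleGraph.fromRel_adj E c d).1 hadj
    · match r, hr with
      | [], hr => exact absurd rfl hr.1
      | y :: s, hr =>
        obtain rfl : y = c := by simpa using hr.2.1
        exact ⟨d :: y :: s, isDirPath_cons_cons_iff.2 ⟨rfl, hcd, hr⟩⟩
    · match r, hr with
      | [], hr => exact absurd rfl hr.1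
      | [_], hr =>
        obtain ⟨rfl, rfl⟩ := isDirPath_singleton_iff.1 hr
        exact absurd hdc (hroot d)
      | _ :: z :: t, hr =>
        obtain ⟨rfl, hz, hr'⟩ := isDirPath_cons_cons_iff.1 hr
        obtain rfl : z = d := uniq z d _ hz hdc
        exact ⟨_, hr'⟩

variable {i n m m' : V} {r : List V}

theorem depth_eq_length_sub_one (uniq : ∀ a b c : V, E a c → E b c → a = b)
    (acyc : ∀ v : V, ¬ TransGen E v v) (hr : IsDirPath (flip E) n root r) :
    depth E root n = r.length - 1 := by
  have hset : {k | ∃ l : List V, IsDirPath E root n l ∧ l.length = k + 1} = {r.length - 1} := by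
    ext k
    constructor
    · rintro ⟨l, hl, hk⟩
      obtain rfl := isDirPath_flip_unique uniq acyc hl.reverse hr
      simp only [List.length_reverse, Set.mem_singleton_iff]
      omega
    · rintro rfl
      refine ⟨r.reverse, hr.reverse, ?_⟩
      have := List.length_pos_iff.2 hr.1
      simp only [List.length_reverse]
      omega
  rw [depth, hset, csInf_singleton]

theorem onPath_iff_mem (uniq : ∀ a b c : V, E a c → E b c → a = b)
    (acyc : ∀ v : V, ¬ TransGen E v v) (hr : IsDirPath (flip E) i root r) :
    OnPath E root i m ↔ m ∈ r := by
  constructor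
  · rintro ⟨l, hl, hm⟩
    rw [← isDirPath_flip_unique uniq acyc hl.reverse hr]
    exact List.mem_reverse.2 hm
  · exact fun hm => ⟨r.reverse, hr.reverse, List.mem_reverse.2 hm⟩

theorem depth_getElem (uniq : ∀ a b c : V, E a c → E b c → a = b)
    (acyc : ∀ v : V, ¬ TransGen E v v) (hr : IsDirPath (flip E) i root r) {k : ℕ}
    (hk : k < r.length) : depth E root r[k] = r.length - 1 - k := by
  rw [depth_eq_length_sub_one uniq acyc (hr.drop hk), List.length_drop]
  omega

theorem depth_le_of_mem (uniq : ∀ a b c : V, E a c → E b c → a = b)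
    (acyc : ∀ v : V, ¬ TransGen E v v) (hr : IsDirPath (flip E) i root r) (hm : m ∈ r) :
    depth E root m ≤ depth E root i := by
  obtain ⟨k, hk, rfl⟩ := List.mem_iff_getElem.1 hm
  rw [depth_getElem uniq acyc hr hk, depth_eq_length_sub_one uniq acyc hr]
  omega

theorem eq_of_mem_of_depth_eq (uniq : ∀ a b c : V, E a c → E b c → a = b)
    (acyc : ∀ v : V, ¬ TransGen E v v) (hr : IsDirPath (flip E) i root r) (hm : m ∈ r)
    (hm' : m' ∈ r) (hd : depth E root m = depth E root m') : m = m' := by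
  obtain ⟨k, hk, rfl⟩ := List.mem_iff_getElem.1 hm
  obtain ⟨k', hk', rfl⟩ := List.mem_iff_getElem.1 hm'
  rw [depth_getElem uniq acyc hr hk, depth_getElem uniq acyc hr hk'] at hd
  obtain rfl : k = k' := by omega
  rfl

theorem existsUnique_onPath_depth_eq (uniq : ∀ a b c : V, E a c → E b c → a = b)
    (acyc : ∀ v : V, ¬ TransGen E v v) (hr : IsDirPath (flip E) i root r) {x : ℕ}
    (hx : x ≤ depth E root i) : ∃! n, OnPath E root i n ∧ depth E root n = x := by
  simp only [onPath_iff_mem uniq acyc hr]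
  rw [depth_eq_length_sub_one uniq acyc hr] at hx
  have hk : r.length - 1 - x < r.length := by
    have := List.length_pos_iff.2 hr.1
    omega
  refine ⟨r[r.length - 1 - x], ⟨List.getElem_mem hk, ?_⟩, ?_⟩
  · rw [depth_getElem uniq acyc hr hk]
    omega
  · rintro n ⟨hn, hnx⟩
    refine eq_of_mem_of_depth_eq uniq acyc hr hn (List.getElem_mem hk) ?_
    rw [hnx, depth_getElem uniq acyc hr hk]
    omega

theorem vEntry_eq_depth_of_onPath (uniq : ∀ a b c : V, E a c → E b c → a = b)
    (acyc : ∀ v : V, ¬ TransGen E v v) (hr : IsDirPath (flip E) n root r)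
    (hn : OnPath E root i n) : vEntry E root n i = depth E root n := by
  refine IsGreatest.csSup_eq ⟨⟨n, (onPath_iff_mem uniq acyc hr).2 hr.head_mem_s11, hn, rfl⟩, ?_⟩
  rintro _ ⟨m, hm, -, rfl⟩
  exact depth_le_of_mem uniq acyc hr ((onPath_iff_mem uniq acyc hr).1 hm)

theorem exists_onPath_depth_eq_vEntry (uniq : ∀ a b c : V, E a c → E b c → a = b)
    (acyc : ∀ v : V, ¬ TransGen E v v) {rn ri : List V} (hn : IsDirPath (flip E) n root rn)
    (hi : IsDirPath (flip E) i root ri) :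
    ∃ m, OnPath E root n m ∧ OnPath E root i m ∧ depth E root m = vEntry E root n i := by
  apply Nat.sSup_mem
    (s := {k | ∃ m, OnPath E root n m ∧ OnPath E root i m ∧ depth E root m = k})
  · exact ⟨_, root, (onPath_iff_mem uniq acyc hn).2 hn.last_mem_s11,
      (onPath_iff_mem uniq acyc hi).2 hi.last_mem_s11, rfl⟩
  refine ⟨depth E root n, ?_⟩
  rintro _ ⟨m, hm, -, rfl⟩
  exact depth_le_of_mem uniq acyc hn ((onPath_iff_mem uniq acyc hn).1 hm)

theorem onPath_depth_eq_iff_vEntry (uniq : ∀ a b c : V, E a c → E b c → a = b)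
    (acyc : ∀ v : V, ¬ TransGen E v v) {rn ri : List V} (hn : IsDirPath (flip E) n root rn)
    (hi : IsDirPath (flip E) i root ri) {x : ℕ} :
    (OnPath E root i n ∧ depth E root n = x) ↔
      (vEntry E root n n = x ∧ vEntry E root n i = x) := by
  have hnn : OnPath E root n n := (onPath_iff_mem uniq acyc hn).2 hn.head_mem_s11
  rw [vEntry_eq_depth_of_onPath uniq acyc hn hnn]
  constructor
  · rintro ⟨hni, rfl⟩
    exact ⟨rfl, vEntry_eq_depth_of_onPath uniq acyc hn hni⟩
  · rintro ⟨rfl, hni⟩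
    obtain ⟨m, hmn, hmi, hm⟩ := exists_onPath_depth_eq_vEntry uniq acyc hn hi
    obtain rfl : m = n := eq_of_mem_of_depth_eq uniq acyc hn
      ((onPath_iff_mem uniq acyc hn).1 hmn) hn.head_mem_s11 (hm.trans hni)
    exact ⟨hmi, rfl⟩

end TransTree

theorem stmt11_general {V : Type*} (E : V → V → Prop) (Samp : Set V)
    (h : IsTransTree E) (root : V) (hroot : ∀ b : V, ¬ E b root)
    (i : V) (δ x : ℕ) (hδ : depth E root i = δ) (hx : x ≤ δ) :
    (∀ a : V, a ∈ Samp →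
      ((OnPath E root i a ∧ depth E root a = x) ↔
        (vEntry E root a a = x ∧ vEntry E root a i = x))) ∧
    ((∃ n : V, OnPath E root i n ∧ depth E root n = x ∧ n ∉ Samp) ↔
      ¬ ∃ b ∈ Samp, vEntry E root b b = x ∧ vEntry E root b i = x) := by
  obtain ⟨uniq, acyc, conn⟩ := h
  choose anc hanc using exists_isDirPath_flip uniq hroot conn
  have key : ∀ a : V, (OnPath E root i a ∧ depth E root a = x) ↔
      (vEntry E root a a = x ∧ vEntry E root a i = x) :=
    fun a => onPath_depth_eq_iff_vEntry uniq acyc (hanc a) (hanc i)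
  have hunique := existsUnique_onPath_depth_eq uniq acyc (hanc i) (hδ ▸ hx)
  obtain ⟨n₀, hn₀⟩ := hunique.exists
  refine ⟨fun a _ => key a, ?_⟩
  simp only [← key]
  constructor
  · rintro ⟨n, hni, hnx, hnS⟩ ⟨b, hbS, hb⟩
    exact hnS (hunique.unique ⟨hni, hnx⟩ hb ▸ hbS)
  · exact fun hno => ⟨n₀, hn₀.1, hn₀.2, fun hS => hno ⟨n₀, hS, hn₀⟩⟩

/-- Let `T = (S ∪ U, E)` be a transmission tree, `i` a sampled node of
depth `δ`, and `0 ≤ x ≤ δ`. Then the (unique) node at depth `x` on the path from the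
source to `i` is a given sampled node `a` iff `v_{a,a}(T) = x` and `v_{a,i}(T) = x`;
and the node at depth `x` on that path is unsampled iff there is no sampled `b` with
`v_{b,b}(T) = x` and `v_{b,i}(T) = x`. -/
theorem stmt11 {V : Type*} [Fintype V] (E : V → V → Prop) (Samp : Set V)
    (h : IsTransTree E) (root : V) (hroot : ∀ b : V, ¬ E b root)
    (i : V) (hi : i ∈ Samp) (δ x : ℕ) (hδ : depth E root i = δ) (hx : x ≤ δ) :
    (∀ a : V, a ∈ Samp →
      ((OnPath E root i a ∧ depth E root a = x) ↔
        (vEntry E root a a = x ∧ vEntry E root a i = x))) ∧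
    ((∃ n : V, OnPath E root i n ∧ depth E root n = x ∧ n ∉ Samp) ↔
      ¬ ∃ b ∈ Samp, vEntry E root b b = x ∧ vEntry E root b i = x) :=
  stmt11_general E Samp h root hroot i δ x hδ hx
end
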